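/- arXiv:1208.5242 — 2 statements merged into one kernel-verified Lean document; each statement's English description precedes it below -/
import Mathlib

section
/- Let 1 ≤ p < ∞, α ∈ ℝ, ω ∈ W_α, ψ : [0,1] → [0,∞) measurable, and s : [0,1] → ℝ measurable with |s(t)| ≥ t^β a.e. for some β > 0. If A := ∫₀¹ |s(t)|^{-(n+α)/p} ψ(t) dt < ∞, then for every f ∈ L^p(ω), the operator U_{ψ,s}f(x) = ∫₀¹ f(s(t)x) ψ(t) dt satisfies ‖U_{ψ,s}f‖_{L^p(ω)} ≤ A ‖f‖_{L^p(ω)}. -/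
open MeasureTheory Metric Set

noncomputable section

/-- The surface integral of `ω` over the unit sphere `S^{n-1}`,
with respect to the measure `σ = volume.toSphere` induced by polar coordinates. -/
def sphereInt {n : ℕ} (ω : EuclideanSpace ℝ (Fin n) → ℝ) : ℝ :=
  ∫ x : sphere (0 : EuclideanSpace ℝ (Fin n)) 1, ω x ∂((volume : Measure (EuclideanSpace ℝ (Fin n))).toSphere)

/-- `ω ∈ W_α`: a measurable, a.e. positive weight on `ℝⁿ`, absolutely homogeneous of
degree `α`, whose integral over the unit sphere is finite and positive. -/
structure IsWeight (n : ℕ) (α : ℝ) (ω : EuclideanSpace ℝ (Fin n) → ℝ) : Prop where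
  measurable : Measurable ω
  pos : ∀ᵐ x : EuclideanSpace ℝ (Fin n), 0 < ω x
  homog : ∀ t : ℝ, t ≠ 0 → ∀ x, ω (t • x) = |t| ^ α * ω x
  sphere_integrable : Integrable (fun x : sphere (0 : EuclideanSpace ℝ (Fin n)) 1 => ω x)
      ((volume : Measure (EuclideanSpace ℝ (Fin n))).toSphere)
  sphere_pos : 0 < sphereInt ω

/-- The generalized weighted Hardy–Cesàro operator
`U_{ψ,s} f(x) = ∫₀¹ f(s(t)·x) ψ(t) dt`. -/
def hardyCesaro {n : ℕ} (ψ s : ℝ → ℝ) (f : EuclideanSpace ℝ (Fin n) → ℝ)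
    (x : EuclideanSpace ℝ (Fin n)) : ℝ :=
  ∫ t in Icc (0 : ℝ) 1, f (s t • x) * ψ t

/-- The generalized weighted Cesàro operator
`V_{ψ,s} f(x) = ∫₀¹ f(s(t)·x) |s(t)|ⁿ ψ(t) dt`. -/
def cesaro {n : ℕ} (ψ s : ℝ → ℝ) (f : EuclideanSpace ℝ (Fin n) → ℝ)
    (x : EuclideanSpace ℝ (Fin n)) : ℝ :=
  ∫ t in Icc (0 : ℝ) 1, f (s t • x) * (|s t| ^ (n : ℝ) * ψ t)

/-- The weighted `L^p(ω)` norm `(∫ |f|^p ω dx)^{1/p}`. -/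
def wNorm {n : ℕ} (ω : EuclideanSpace ℝ (Fin n) → ℝ) (p : ℝ)
    (f : EuclideanSpace ℝ (Fin n) → ℝ) : ℝ :=
  (∫ x, |f x| ^ p * ω x) ^ (1 / p)

/-- Membership in the weighted Lebesgue space `L^p(ω)`. -/
def MemWLp {n : ℕ} (ω : EuclideanSpace ℝ (Fin n) → ℝ) (p : ℝ)
    (f : EuclideanSpace ℝ (Fin n) → ℝ) : Prop :=
  AEMeasurable f (volume : Measure (EuclideanSpace ℝ (Fin n))) ∧
    Integrable (fun x => |f x| ^ p * ω x)

open scoped ENNReal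
open Function

/-!
Let `ρ(dt) = |s t|^{-(n+α)/p} ψ(t) dt`, a measure of total mass `A`. Pointwise,
`|U f(x)| ≤ ∫ G(t, x) ρ(dt)` with `G(t, x) = |f(s t • x)| |s t|^{(n+α)/p}`, and the homogeneity of
`ω` and of Lebesgue measure makes `‖G(t, ·)‖_{L^p(ω)} = ‖f‖_{L^p(ω)}` for every `t`. Hölder's
inequality for `ρ`, `(∫ G dρ)^p ≤ A^{p-1} ∫ G^p dρ`, and Tonelli then give `‖U f‖^p ≤ A^p ‖f‖^p`:
since the fibre norms do not depend on `t`, Minkowski's integral inequality is not needed.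
-/

theorem rpow_lintegral_le_mul_lintegral_rpow {X : Type*} [MeasurableSpace X] {μ : Measure X}
    {p : ℝ} (hp : 1 ≤ p) {f : X → ℝ≥0∞} (hf : AEMeasurable f μ) :
    (∫⁻ x, f x ∂μ) ^ p ≤ μ univ ^ (p - 1) * ∫⁻ x, f x ^ p ∂μ := by
  have hp0 : 0 < p := zero_lt_one.trans_le hp
  have holder := eLpNorm'_le_eLpNorm'_mul_rpow_measure_univ zero_lt_one hp hf.aestronglyMeasurable
  simp only [eLpNorm', enorm_eq_self, ENNReal.rpow_one, div_one] at holder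
  calc (∫⁻ x, f x ∂μ) ^ p
      ≤ ((∫⁻ x, f x ^ p ∂μ) ^ (1 / p) * μ univ ^ (1 - 1 / p)) ^ p :=
        ENNReal.rpow_le_rpow holder hp0.le
    _ = μ univ ^ (p - 1) * ∫⁻ x, f x ^ p ∂μ := by
        rw [ENNReal.mul_rpow_of_nonneg _ _ hp0.le, ← ENNReal.rpow_mul, ← ENNReal.rpow_mul,
          one_div_mul_cancel hp0.ne', ENNReal.rpow_one, mul_comm, sub_mul, one_mul,
          one_div_mul_cancel hp0.ne']

theorem lintegral_rpow_lintegral_le {X T : Type*} [MeasurableSpace X] [MeasurableSpace T]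
    {μ : Measure X} {ρ : Measure T} [SFinite μ] [SFinite ρ] {p : ℝ} (hp : 1 ≤ p)
    {G : T → X → ℝ≥0∞} (hG : Measurable (uncurry G)) {M : ℝ≥0∞}
    (hM : ∀ᵐ t ∂ρ, ∫⁻ x, G t x ^ p ∂μ ≤ M) :
    ∫⁻ x, (∫⁻ t, G t x ∂ρ) ^ p ∂μ ≤ ρ univ ^ p * M := by
  have hp0 : 0 < p := zero_lt_one.trans_le hp
  calc ∫⁻ x, (∫⁻ t, G t x ∂ρ) ^ p ∂μ
      ≤ ∫⁻ x, ρ univ ^ (p - 1) * ∫⁻ t, G t x ^ p ∂ρ ∂μ :=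
        lintegral_mono fun x => rpow_lintegral_le_mul_lintegral_rpow hp
          (hG.comp measurable_prodMk_right).aemeasurable
    _ = ρ univ ^ (p - 1) * ∫⁻ t, ∫⁻ x, G t x ^ p ∂μ ∂ρ := by
        have hGp : Measurable fun x => ∫⁻ t, G t x ^ p ∂ρ := (hG.pow_const p).lintegral_prod_left'
        rw [lintegral_const_mul _ hGp,
          lintegral_lintegral_swap (f := fun x t => G t x ^ p)
            ((hG.pow_const p).comp measurable_swap).aemeasurable]
    _ ≤ ρ univ ^ (p - 1) * ∫⁻ _, M ∂ρ := mul_le_mul_right (lintegral_mono_ae hM) _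
    _ = ρ univ ^ (p - 1) * ρ univ ^ (1 : ℝ) * M := by
        rw [lintegral_const, ENNReal.rpow_one, mul_comm M, mul_assoc]
    _ = ρ univ ^ p * M := by
        rw [← ENNReal.rpow_add_of_nonneg _ _ (by linarith) zero_le_one, sub_add_cancel]

abbrev weightedVolume {n : ℕ} (ω : EuclideanSpace ℝ (Fin n) → ℝ) :
    Measure (EuclideanSpace ℝ (Fin n)) :=
  volume.withDensity fun x => ENNReal.ofReal (ω x)

theorem MeasureTheory.Measure.lintegral_comp_smul {E : Type*} [NormedAddCommGroup E]
    [NormedSpace ℝ E] [MeasurableSpace E] [BorelSpace E] [FiniteDimensional ℝ E]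
    (μ : Measure E) [μ.IsAddHaarMeasure] {c : ℝ} (hc : c ≠ 0) (φ : E → ℝ≥0∞) :
    ∫⁻ x, φ (c • x) ∂μ = ENNReal.ofReal (|c| ^ (-(Module.finrank ℝ E : ℝ))) * ∫⁻ x, φ x ∂μ := by
  calc ∫⁻ x, φ (c • x) ∂μ = ∫⁻ x, φ x ∂(μ.map (c • ·)) :=
        (lintegral_map_equiv φ (MeasurableEquiv.smul₀ c hc)).symm
    _ = _ := by
        rw [Measure.map_addHaar_smul μ hc, lintegral_smul_measure, abs_inv, abs_pow,
          Real.rpow_neg (abs_nonneg c), Real.rpow_natCast, smul_eq_mul]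

theorem IsWeight.lintegral_comp_smul {n : ℕ} {α : ℝ} {ω : EuclideanSpace ℝ (Fin n) → ℝ}
    (hω : IsWeight n α ω) {c : ℝ} (hc : c ≠ 0) {φ : EuclideanSpace ℝ (Fin n) → ℝ≥0∞}
    (hφ : Measurable φ) :
    ∫⁻ x, φ (c • x) ∂weightedVolume ω =
      ENNReal.ofReal (|c| ^ (-((n : ℝ) + α))) * ∫⁻ x, φ x ∂weightedVolume ω := by
  have hw : Measurable fun x => ENNReal.ofReal (ω x) := hω.measurable.ennreal_ofReal
  have hc0 : 0 < |c| := abs_pos.2 hc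
  have hdens : ∀ x, ENNReal.ofReal (ω x) =
      ENNReal.ofReal (|c| ^ (-α)) * ENNReal.ofReal (ω (c • x)) := by
    intro x
    rw [hω.homog c hc x, ← ENNReal.ofReal_mul (by positivity), ← mul_assoc,
      ← Real.rpow_add hc0, neg_add_cancel, Real.rpow_zero, one_mul]
  rw [weightedVolume, lintegral_withDensity_eq_lintegral_mul _ hw hφ,
    lintegral_withDensity_eq_lintegral_mul _ hw (g := fun x => φ (c • x))
      (hφ.comp (measurable_const_smul c))]
  calc ∫⁻ x, ENNReal.ofReal (ω x) * φ (c • x)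
      = ∫⁻ x, ENNReal.ofReal (|c| ^ (-α)) * (ENNReal.ofReal (ω (c • x)) * φ (c • x)) :=
        lintegral_congr fun x => by rw [hdens x, mul_assoc]
    _ = _ := by
        rw [lintegral_const_mul' _ _ ENNReal.ofReal_ne_top,
          Measure.lintegral_comp_smul volume hc (fun x => ENNReal.ofReal (ω x) * φ x),
          finrank_euclideanSpace_fin, ← mul_assoc,
          ← ENNReal.ofReal_mul (by positivity), ← Real.rpow_add hc0, neg_add, add_comm]
        rfl

theorem lintegral_enorm_rpow_weightedVolume {n : ℕ} {ω : EuclideanSpace ℝ (Fin n) → ℝ}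
    (hω : Measurable ω) {p : ℝ} (hp : 0 ≤ p) (h : EuclideanSpace ℝ (Fin n) → ℝ) :
    ∫⁻ x, ‖h x‖ₑ ^ p ∂weightedVolume ω = ∫⁻ x, ENNReal.ofReal (|h x| ^ p * ω x) := by
  rw [weightedVolume, lintegral_withDensity_eq_lintegral_mul_non_measurable₀ _
    hω.ennreal_ofReal.aemeasurable (ae_of_all _ fun _ => ENNReal.ofReal_lt_top)]
  congr 1 with x
  rw [Pi.mul_apply, ENNReal.ofReal_mul (Real.rpow_nonneg (abs_nonneg _) p), mul_comm,
    Real.enorm_eq_ofReal_abs, ENNReal.ofReal_rpow_of_nonneg (abs_nonneg _) hp]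

theorem wNorm_eq_lintegral {n : ℕ} {ω : EuclideanSpace ℝ (Fin n) → ℝ} (hω : Measurable ω)
    (hω0 : ∀ᵐ x, 0 ≤ ω x) {p : ℝ} (hp : 0 ≤ p) {h : EuclideanSpace ℝ (Fin n) → ℝ}
    (hh : AEMeasurable h) :
    wNorm ω p h = (∫⁻ x, ‖h x‖ₑ ^ p ∂weightedVolume ω).toReal ^ (1 / p) := by
  have hint : ∀ᵐ x, 0 ≤ |h x| ^ p * ω x :=
    hω0.mono fun x hx => mul_nonneg (Real.rpow_nonneg (abs_nonneg _) p) hx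
  rw [wNorm, integral_eq_lintegral_of_nonneg_ae hint
      ((hh.abs.pow_const p).mul hω.aemeasurable).aestronglyMeasurable,
    lintegral_enorm_rpow_weightedVolume hω hp]

theorem ENNReal.toReal_rpow_one_div_le {x y : ℝ≥0∞} {a p : ℝ} (ha : 0 ≤ a) (hp : 0 < p)
    (hy : y ≠ ⊤) (h : x ≤ ENNReal.ofReal a ^ p * y) :
    x.toReal ^ (1 / p) ≤ a * y.toReal ^ (1 / p) := by
  have hfin : ENNReal.ofReal a ^ p * y ≠ ⊤ :=
    ENNReal.mul_ne_top (ENNReal.rpow_ne_top_of_nonneg hp.le ENNReal.ofReal_ne_top) hy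
  calc x.toReal ^ (1 / p) ≤ (ENNReal.ofReal a ^ p * y).toReal ^ (1 / p) :=
        Real.rpow_le_rpow ENNReal.toReal_nonneg (ENNReal.toReal_mono hfin h) (by positivity)
    _ = a * y.toReal ^ (1 / p) := by
        rw [ENNReal.toReal_mul, ← ENNReal.toReal_rpow, ENNReal.toReal_ofReal ha,
          Real.mul_rpow (by positivity) ENNReal.toReal_nonneg, ← Real.rpow_mul ha,
          mul_one_div_cancel hp.ne', Real.rpow_one]

theorem wNorm_congr_ae {n : ℕ} {ω : EuclideanSpace ℝ (Fin n) → ℝ} {p : ℝ}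
    {f g : EuclideanSpace ℝ (Fin n) → ℝ} (hfg : f =ᵐ[volume] g) : wNorm ω p f = wNorm ω p g := by
  unfold wNorm
  congr 1
  exact integral_congr_ae (hfg.mono fun x hx => by simp only [hx])

theorem ae_ne_zero_of_rpow_le_abs {s : ℝ → ℝ} {β : ℝ}
    (hs : ∀ᵐ t ∂(volume.restrict (Icc (0 : ℝ) 1)), t ^ β ≤ |s t|) :
    ∀ᵐ t ∂(volume.restrict (Icc (0 : ℝ) 1)), s t ≠ 0 := by
  filter_upwards [hs, ae_restrict_mem measurableSet_Icc, Measure.ae_ne _ 0] with t hst ht ht0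
  rw [← abs_pos]
  exact (Real.rpow_pos_of_pos (ht.1.lt_of_ne' ht0) β).trans_le hst

theorem hardyCesaro_congr_ae {n : ℕ} {ψ s : ℝ → ℝ} (hsm : Measurable s)
    (hs0 : ∀ᵐ t ∂(volume.restrict (Icc (0 : ℝ) 1)), s t ≠ 0)
    {f g : EuclideanSpace ℝ (Fin n) → ℝ} (hfg : f =ᵐ[volume] g) :
    hardyCesaro ψ s f =ᵐ[volume] hardyCesaro ψ s g := by
  set N := toMeasurable volume {y | f y ≠ g y}
  have hN : volume N = 0 := by rw [measure_toMeasurable]; exact hfg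
  have hmeas : MeasurableSet {q : ℝ × EuclideanSpace ℝ (Fin n) | s q.1 • q.2 ∉ N} :=
    (((hsm.comp measurable_fst).smul measurable_snd) (measurableSet_toMeasurable _ _)).compl
  have hae : ∀ᵐ t ∂(volume.restrict (Icc (0 : ℝ) 1)), ∀ᵐ x, s t • x ∉ N := by
    filter_upwards [hs0] with t ht
    have hnull : volume ((s t • ·) ⁻¹' N) = 0 := by
      rw [Measure.addHaar_preimage_smul volume ht, hN, mul_zero]
    exact measure_eq_zero_iff_ae_notMem.1 hnull
  filter_upwards [(Measure.ae_ae_comm hmeas).1 hae] with x hx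
  refine integral_congr_ae (hx.mono fun t ht => ?_)
  have hfg_t : f (s t • x) = g (s t • x) := not_not.1 fun hne => ht (subset_toMeasurable _ _ hne)
  simp only [hfg_t]

theorem measurable_hardyCesaro {n : ℕ} {ψ s : ℝ → ℝ} (hψm : Measurable ψ) (hsm : Measurable s)
    {f : EuclideanSpace ℝ (Fin n) → ℝ} (hf : Measurable f) : Measurable (hardyCesaro ψ s f) :=
  (((hf.comp ((hsm.comp measurable_snd).smul measurable_fst)).mul
    (hψm.comp measurable_snd)).stronglyMeasurable.integral_prod_right').measurable

theorem lintegral_hardyCesaro_rpow_le {n : ℕ} {α p : ℝ} (hp : 1 ≤ p)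
    {ω : EuclideanSpace ℝ (Fin n) → ℝ} (hω : IsWeight n α ω)
    {ψ s : ℝ → ℝ} (hψm : Measurable ψ) (hψ : ∀ t ∈ Icc (0 : ℝ) 1, 0 ≤ ψ t)
    (hsm : Measurable s) (hs0 : ∀ᵐ t ∂(volume.restrict (Icc (0 : ℝ) 1)), s t ≠ 0)
    {g : EuclideanSpace ℝ (Fin n) → ℝ} (hg : Measurable g) :
    ∫⁻ x, ‖hardyCesaro ψ s g x‖ₑ ^ p ∂weightedVolume ω ≤
      (∫⁻ t in Icc (0 : ℝ) 1, ENNReal.ofReal (|s t| ^ (-((n : ℝ) + α) / p) * ψ t)) ^ p *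
        ∫⁻ x, ‖g x‖ₑ ^ p ∂weightedVolume ω := by
  have hp0 : 0 < p := zero_lt_one.trans_le hp
  set a : ℝ → ℝ≥0∞ := fun t => ENNReal.ofReal (|s t| ^ (-((n : ℝ) + α) / p) * ψ t)
  set ρ := (volume.restrict (Icc (0 : ℝ) 1)).withDensity a
  set G : ℝ → EuclideanSpace ℝ (Fin n) → ℝ≥0∞ :=
    fun t x => ‖g (s t • x)‖ₑ * ENNReal.ofReal (|s t| ^ (((n : ℝ) + α) / p))
  have ha : Measurable a := by fun_prop
  have hG : Measurable (uncurry G) := by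
    have hsx : Measurable fun q : ℝ × EuclideanSpace ℝ (Fin n) => s q.1 • q.2 :=
      (hsm.comp measurable_fst).smul measurable_snd
    exact (hg.comp hsx).enorm.mul (by fun_prop)
  have hpoint : ∀ x, ‖hardyCesaro ψ s g x‖ₑ ≤ ∫⁻ t, G t x ∂ρ := by
    intro x
    rw [lintegral_withDensity_eq_lintegral_mul _ ha (g := fun t => G t x)
      (hG.comp measurable_prodMk_right)]
    refine (enorm_integral_le_lintegral_enorm _).trans_eq (lintegral_congr_ae ?_)
    filter_upwards [hs0, ae_restrict_mem measurableSet_Icc] with t hst ht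
    simp only [Pi.mul_apply, a, G]
    rw [enorm_mul, Real.enorm_of_nonneg (hψ t ht), mul_left_comm,
      ← ENNReal.ofReal_mul (mul_nonneg (by positivity) (hψ t ht)), mul_right_comm,
      ← Real.rpow_add (abs_pos.2 hst), neg_div, neg_add_cancel, Real.rpow_zero, one_mul]
  have hfiber : ∀ᵐ t ∂ρ,
      ∫⁻ x, G t x ^ p ∂weightedVolume ω = ∫⁻ x, ‖g x‖ₑ ^ p ∂weightedVolume ω := by
    filter_upwards [(withDensity_absolutelyContinuous _ _).ae_le hs0] with t hst
    have hst' : 0 < |s t| := abs_pos.2 hst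
    calc ∫⁻ x, G t x ^ p ∂weightedVolume ω
        = ∫⁻ x, ENNReal.ofReal (|s t| ^ ((n : ℝ) + α)) * ‖g (s t • x)‖ₑ ^ p ∂weightedVolume ω :=
          lintegral_congr fun x => by
            rw [ENNReal.mul_rpow_of_nonneg _ _ hp0.le,
              ENNReal.ofReal_rpow_of_nonneg (by positivity) hp0.le, ← Real.rpow_mul hst'.le,
              div_mul_cancel₀ _ hp0.ne', mul_comm]
      _ = ENNReal.ofReal (|s t| ^ ((n : ℝ) + α)) *
            (ENNReal.ofReal (|s t| ^ (-((n : ℝ) + α))) * ∫⁻ x, ‖g x‖ₑ ^ p ∂weightedVolume ω) := by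
          rw [lintegral_const_mul' _ _ ENNReal.ofReal_ne_top,
            hω.lintegral_comp_smul hst (hg.enorm.pow_const p)]
      _ = ∫⁻ x, ‖g x‖ₑ ^ p ∂weightedVolume ω := by
          rw [← mul_assoc, ← ENNReal.ofReal_mul (by positivity), ← Real.rpow_add hst',
            add_neg_cancel, Real.rpow_zero, ENNReal.ofReal_one, one_mul]
  calc ∫⁻ x, ‖hardyCesaro ψ s g x‖ₑ ^ p ∂weightedVolume ω
      ≤ ∫⁻ x, (∫⁻ t, G t x ∂ρ) ^ p ∂weightedVolume ω :=
        lintegral_mono fun x => ENNReal.rpow_le_rpow (hpoint x) hp0.le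
    _ ≤ ρ univ ^ p * ∫⁻ x, ‖g x‖ₑ ^ p ∂weightedVolume ω :=
        lintegral_rpow_lintegral_le hp hG (hfiber.mono fun t ht => ht.le)
    _ = _ := by rw [withDensity_apply _ MeasurableSet.univ, Measure.restrict_univ]

theorem hardyCesaro_wnorm_le_general {n : ℕ} {α p β : ℝ} (hp : 1 ≤ p)
    {ω : EuclideanSpace ℝ (Fin n) → ℝ} (hω : IsWeight n α ω)
    {ψ s : ℝ → ℝ} (hψm : Measurable ψ) (hψ : ∀ t ∈ Icc (0 : ℝ) 1, 0 ≤ ψ t)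
    (hsm : Measurable s)
    (hs : ∀ᵐ t ∂(volume.restrict (Icc (0 : ℝ) 1)), t ^ β ≤ |s t|)
    (hA : IntegrableOn (fun t => |s t| ^ (-((n : ℝ) + α) / p) * ψ t) (Icc (0 : ℝ) 1))
    (f : EuclideanSpace ℝ (Fin n) → ℝ) (hf : MemWLp ω p f) :
    wNorm ω p (hardyCesaro ψ s f) ≤
      (∫ t in Icc (0 : ℝ) 1, |s t| ^ (-((n : ℝ) + α) / p) * ψ t) * wNorm ω p f := by
  obtain ⟨hf_meas, hf_int⟩ := hf
  have hp0 : 0 < p := zero_lt_one.trans_le hp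
  have hω0 : ∀ᵐ x, 0 ≤ ω x := hω.pos.mono fun _ hx => hx.le
  have hs0 := ae_ne_zero_of_rpow_le_abs hs
  have hA0 : ∀ᵐ t ∂(volume.restrict (Icc (0 : ℝ) 1)),
      0 ≤ |s t| ^ (-((n : ℝ) + α) / p) * ψ t := by
    filter_upwards [ae_restrict_mem measurableSet_Icc] with t ht
    exact mul_nonneg (by positivity) (hψ t ht)
  have hLf : ∫⁻ x, ‖f x‖ₑ ^ p ∂weightedVolume ω =
      ∫⁻ x, ‖hf_meas.mk f x‖ₑ ^ p ∂weightedVolume ω :=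
    lintegral_congr_ae (((withDensity_absolutelyContinuous _ _).ae_eq hf_meas.ae_eq_mk).mono
      fun x hx => by simp only [hx])
  have key := lintegral_hardyCesaro_rpow_le hp hω hψm hψ hsm hs0 hf_meas.measurable_mk
  rw [← ofReal_integral_eq_lintegral_ofReal hA hA0, ← hLf] at key
  rw [wNorm_congr_ae (hardyCesaro_congr_ae hsm hs0 hf_meas.ae_eq_mk),
    wNorm_eq_lintegral hω.measurable hω0 hp0.le
      (measurable_hardyCesaro hψm hsm hf_meas.measurable_mk).aemeasurable,
    wNorm_eq_lintegral hω.measurable hω0 hp0.le hf_meas]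
  refine ENNReal.toReal_rpow_one_div_le (integral_nonneg_of_ae hA0) hp0 ?_ key
  rw [lintegral_enorm_rpow_weightedVolume hω.measurable hp0.le]
  exact hf_int.lintegral_lt_top.ne

/-- If `A = ∫₀¹ |s(t)|^{-(n+α)/p} ψ(t) dt < ∞`, then `U_{ψ,s}` is bounded on `L^p(ω)`
with `‖U_{ψ,s}f‖_{L^p(ω)} ≤ A ‖f‖_{L^p(ω)}`. -/
theorem hardyCesaro_wnorm_le {n : ℕ} (hn : 1 ≤ n) {α p β : ℝ} (hp : 1 ≤ p)
    {ω : EuclideanSpace ℝ (Fin n) → ℝ} (hω : IsWeight n α ω)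
    {ψ s : ℝ → ℝ} (hψm : Measurable ψ) (hψ : ∀ t ∈ Icc (0 : ℝ) 1, 0 ≤ ψ t)
    (hsm : Measurable s) (hβ : 0 < β)
    (hs : ∀ᵐ t ∂(volume.restrict (Icc (0 : ℝ) 1)), t ^ β ≤ |s t|)
    (hA : IntegrableOn (fun t => |s t| ^ (-((n : ℝ) + α) / p) * ψ t) (Icc (0 : ℝ) 1))
    (f : EuclideanSpace ℝ (Fin n) → ℝ) (hf : MemWLp ω p f) :
    wNorm ω p (hardyCesaro ψ s f) ≤
      (∫ t in Icc (0 : ℝ) 1, |s t| ^ (-((n : ℝ) + α) / p) * ψ t) * wNorm ω p f :=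
  hardyCesaro_wnorm_le_general hp hω hψm hψ hsm hs hA f hf
end
end

section
/- For 1 < p < ∞ and b < p, for any nonnegative measurable f on (0,∞): (∫₀^∞ (∫₀^x f(t) dt)^p x^{-b-1} dx)^{1/p} ≤ (p/b) (∫₀^∞ f(t)^p t^{p-b-1} dt)^{1/p}, provided b > 0. -/
/-!
Write `b = a p`. Hölder's inequality against the weight `t ^ ((1 - a) (p - 1))` gives
`(∫₀ˣ f) ^ p ≤ (x ^ a / a) ^ (p - 1) ∫₀ˣ f ^ p t ^ ((1 - a) (p - 1))`, and after multiplying by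
`x ^ (-b - 1)` the `x`-dependence collapses to `a ^ (1 - p) x ^ (-a - 1)`. Exchanging the order of
integration and using `∫ₜ^∞ x ^ (-a - 1) dx = t ^ (-a) / a` turns the weight into `t ^ (p - b - 1)`
with total constant `a ^ (-p) = (p / b) ^ p`.
-/

open MeasureTheory Set
open scoped ENNReal

theorem lintegral_Ioi_mul_lintegral_Ioc (c : ℝ) {H K : ℝ → ℝ≥0∞} (hH : Measurable H)
    (hK : Measurable K) :
    ∫⁻ x in Ioi c, (∫⁻ t in Ioc c x, H t) * K x = ∫⁻ t in Ioi c, H t * ∫⁻ x in Ioi t, K x := by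
  set Φ : ℝ × ℝ → ℝ≥0∞ := {z | z.2 ≤ z.1}.indicator fun z => H z.2 * K z.1
  have hΦ : Measurable Φ :=
    ((hH.comp measurable_snd).mul (hK.comp measurable_fst)).indicator
      (measurableSet_le measurable_snd measurable_fst)
  calc ∫⁻ x in Ioi c, (∫⁻ t in Ioc c x, H t) * K x
      = ∫⁻ x in Ioi c, ∫⁻ t in Ioi c, Φ (x, t) := by
        refine lintegral_congr fun x => ?_
        change _ = ∫⁻ t in Ioi c, (Iic x).indicator (fun t => H t * K x) t
        rw [lintegral_indicator measurableSet_Iic, Measure.restrict_restrict measurableSet_Iic,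
          Iic_inter_Ioi, lintegral_mul_const _ hH]
    _ = ∫⁻ t in Ioi c, ∫⁻ x in Ioi c, Φ (x, t) := lintegral_lintegral_swap hΦ.aemeasurable
    _ = ∫⁻ t in Ioi c, H t * ∫⁻ x in Ioi t, K x := by
        refine setLIntegral_congr_fun measurableSet_Ioi fun t ht => ?_
        change ∫⁻ x in Ioi c, (Ici t).indicator (fun x => H t * K x) x = _
        rw [lintegral_indicator measurableSet_Ici, Measure.restrict_restrict measurableSet_Ici,
          inter_eq_left.mpr (Ici_subset_Ioi.mpr ht), lintegral_const_mul _ hK,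
          setLIntegral_congr Ioi_ae_eq_Ici.symm]

theorem lintegral_Ioc_zero_ofReal_rpow {s x : ℝ} (hs : -1 < s) (hx : 0 ≤ x) :
    ∫⁻ t in Ioc 0 x, ENNReal.ofReal (t ^ s) = ENNReal.ofReal (x ^ (s + 1) / (s + 1)) := by
  rw [← ofReal_integral_eq_lintegral_ofReal, ← intervalIntegral.integral_of_le hx,
    integral_rpow (.inl hs), Real.zero_rpow (by linarith), sub_zero]
  · exact (intervalIntegrable_iff_integrableOn_Ioc_of_le hx).mp
      (intervalIntegral.intervalIntegrable_rpow' hs)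
  · filter_upwards [ae_restrict_mem measurableSet_Ioc] with t ht
    exact Real.rpow_nonneg ht.1.le s

theorem lintegral_Ioi_ofReal_rpow {s c : ℝ} (hs : s < -1) (hc : 0 < c) :
    ∫⁻ x in Ioi c, ENNReal.ofReal (x ^ s) = ENNReal.ofReal (-c ^ (s + 1) / (s + 1)) := by
  rw [← ofReal_integral_eq_lintegral_ofReal, integral_Ioi_rpow_of_lt hs hc]
  · exact integrableOn_Ioi_rpow_of_lt hs hc
  · filter_upwards [ae_restrict_mem measurableSet_Ioi] with x hx
    exact Real.rpow_nonneg (hc.trans hx).le s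

theorem lintegral_rpow_le_lintegral_mul_weight {α : Type*} [MeasurableSpace α] (μ : Measure α)
    {p : ℝ} (hp : 1 < p) {g w : α → ℝ≥0∞} (hg : AEMeasurable g μ) (hw : AEMeasurable w μ)
    (hw0 : ∀ᵐ x ∂μ, w x ≠ 0) (hw_top : ∀ᵐ x ∂μ, w x ≠ ∞) :
    (∫⁻ x, g x ∂μ) ^ p ≤
      (∫⁻ x, g x ^ p * w x ∂μ) * (∫⁻ x, w x ^ (-(p - 1)⁻¹) ∂μ) ^ (p - 1) := by
  have hp0 : 0 < p := by linarith
  have hpq : p.HolderConjugate p.conjExponent := .conjExponent hp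
  have hq_div_p : p.conjExponent / p = (p - 1)⁻¹ := by
    rw [Real.conjExponent]; field_simp
  have hp_div_q : p / p.conjExponent = p - 1 := by
    rw [Real.conjExponent]; field_simp
  have holder := ENNReal.lintegral_mul_le_Lp_mul_Lq μ hpq
    (f := fun x => g x * w x ^ p⁻¹) (g := fun x => w x ^ (-p⁻¹))
    (hg.mul (hw.pow_const p⁻¹)) (hw.pow_const (-p⁻¹))
  have hmul : ∫⁻ x, ((fun x => g x * w x ^ p⁻¹) * fun x => w x ^ (-p⁻¹)) x ∂μ
      = ∫⁻ x, g x ∂μ := by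
    refine lintegral_congr_ae ?_
    filter_upwards [hw0, hw_top] with x h0 htop
    rw [Pi.mul_apply, mul_assoc, ← ENNReal.rpow_add _ _ h0 htop, add_neg_cancel,
      ENNReal.rpow_zero, mul_one]
  have hF : ∫⁻ x, (g x * w x ^ p⁻¹) ^ p ∂μ = ∫⁻ x, g x ^ p * w x ∂μ := by
    refine lintegral_congr fun x => ?_
    rw [ENNReal.mul_rpow_of_nonneg _ _ hp0.le, ← ENNReal.rpow_mul, inv_mul_cancel₀ hp0.ne',
      ENNReal.rpow_one]
  have hG : ∫⁻ x, (w x ^ (-p⁻¹)) ^ p.conjExponent ∂μ = ∫⁻ x, w x ^ (-(p - 1)⁻¹) ∂μ := by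
    refine lintegral_congr fun x => ?_
    rw [← ENNReal.rpow_mul, ← hq_div_p]
    ring_nf
  rw [hmul, hF, hG] at holder
  calc (∫⁻ x, g x ∂μ) ^ p
      ≤ ((∫⁻ x, g x ^ p * w x ∂μ) ^ (1 / p) *
          (∫⁻ x, w x ^ (-(p - 1)⁻¹) ∂μ) ^ (1 / p.conjExponent)) ^ p :=
        ENNReal.rpow_le_rpow holder hp0.le
    _ = _ := by
        rw [ENNReal.mul_rpow_of_nonneg _ _ hp0.le, ← ENNReal.rpow_mul, ← ENNReal.rpow_mul,
          one_div_mul_cancel hp0.ne', ENNReal.rpow_one, one_div_mul_eq_div, hp_div_q]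

theorem lintegral_Ioc_zero_rpow_mul_le {p a x : ℝ} (hp : 1 < p) (ha : 0 < a) (hx : 0 < x)
    {g : ℝ → ℝ≥0∞} (hg : Measurable g) :
    (∫⁻ t in Ioc 0 x, g t) ^ p * ENNReal.ofReal (x ^ (-(a * p) - 1)) ≤
      ENNReal.ofReal (a ^ (1 - p)) *
        ((∫⁻ t in Ioc 0 x, g t ^ p * ENNReal.ofReal (t ^ ((1 - a) * (p - 1)))) *
          ENNReal.ofReal (x ^ (-a - 1))) := by
  have hp1 : 0 < p - 1 := by linarith
  have weight : ∫⁻ t in Ioc 0 x, ENNReal.ofReal (t ^ ((1 - a) * (p - 1))) ^ (-(p - 1)⁻¹)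
      = ENNReal.ofReal (x ^ a / a) := by
    calc _ = ∫⁻ t in Ioc 0 x, ENNReal.ofReal (t ^ (a - 1)) := by
          refine setLIntegral_congr_fun measurableSet_Ioc fun t ht => ?_
          rw [ENNReal.ofReal_rpow_of_pos (Real.rpow_pos_of_pos ht.1 _), ← Real.rpow_mul ht.1.le]
          congr 2
          field_simp
          ring
      _ = _ := by rw [lintegral_Ioc_zero_ofReal_rpow (by linarith) hx.le, sub_add_cancel]
  have holder := lintegral_rpow_le_lintegral_mul_weight (volume.restrict (Ioc 0 x)) hp
    (w := fun t => ENNReal.ofReal (t ^ ((1 - a) * (p - 1)))) hg.aemeasurable (by fun_prop)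
    ((ae_restrict_iff' measurableSet_Ioc).mpr (Filter.Eventually.of_forall fun t ht =>
      ENNReal.ofReal_pos.mpr (Real.rpow_pos_of_pos ht.1 _) |>.ne'))
    (Filter.Eventually.of_forall fun _ => ENNReal.ofReal_ne_top)
  rw [weight] at holder
  have exponents : (x ^ a / a) ^ (p - 1) * x ^ (-(a * p) - 1) = a ^ (1 - p) * x ^ (-a - 1) := by
    rw [Real.div_rpow (by positivity) ha.le, ← Real.rpow_mul hx.le, div_mul_eq_mul_div,
      ← Real.rpow_add hx, div_eq_mul_inv, ← Real.rpow_neg ha.le, neg_sub]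
    ring_nf
  calc _ ≤ (∫⁻ t in Ioc 0 x, g t ^ p * ENNReal.ofReal (t ^ ((1 - a) * (p - 1)))) *
        ENNReal.ofReal (x ^ a / a) ^ (p - 1) * ENNReal.ofReal (x ^ (-(a * p) - 1)) :=
        mul_le_mul_left holder _
    _ = _ := by
        rw [ENNReal.ofReal_rpow_of_pos (by positivity), mul_assoc,
          ← ENNReal.ofReal_mul (by positivity), exponents, ENNReal.ofReal_mul (by positivity)]
        ring

theorem lintegral_hardy_rpow_le {p a : ℝ} (hp : 1 < p) (ha : 0 < a) {g : ℝ → ℝ≥0∞}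
    (hg : Measurable g) :
    ∫⁻ x in Ioi 0, (∫⁻ t in Ioc 0 x, g t) ^ p * ENNReal.ofReal (x ^ (-(a * p) - 1)) ≤
      ENNReal.ofReal (a ^ (-p)) *
        ∫⁻ t in Ioi 0, g t ^ p * ENNReal.ofReal (t ^ (p - a * p - 1)) := by
  calc _ ≤ ∫⁻ x in Ioi 0, ENNReal.ofReal (a ^ (1 - p)) *
        ((∫⁻ t in Ioc 0 x, g t ^ p * ENNReal.ofReal (t ^ ((1 - a) * (p - 1)))) *
          ENNReal.ofReal (x ^ (-a - 1))) :=
        setLIntegral_mono' measurableSet_Ioi fun x hx => lintegral_Ioc_zero_rpow_mul_le hp ha hx hg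
    _ = ENNReal.ofReal (a ^ (1 - p)) *
        ∫⁻ t in Ioi 0, g t ^ p * ENNReal.ofReal (t ^ ((1 - a) * (p - 1))) *
          ∫⁻ x in Ioi t, ENNReal.ofReal (x ^ (-a - 1)) := by
        rw [lintegral_const_mul' _ _ ENNReal.ofReal_ne_top,
          lintegral_Ioi_mul_lintegral_Ioc 0 (by fun_prop) (by fun_prop)]
    _ = ENNReal.ofReal (a ^ (1 - p)) *
        ∫⁻ t in Ioi 0, ENNReal.ofReal a⁻¹ * (g t ^ p * ENNReal.ofReal (t ^ (p - a * p - 1))) := by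
        congr 1
        refine setLIntegral_congr_fun measurableSet_Ioi fun t (ht : 0 < t) => ?_
        have exponents : t ^ ((1 - a) * (p - 1)) * (-t ^ (-a - 1 + 1) / (-a - 1 + 1)) =
            a⁻¹ * t ^ (p - a * p - 1) := by
          rw [show -a - 1 + 1 = -a by ring, neg_div_neg_eq, div_eq_inv_mul, mul_left_comm,
            ← Real.rpow_add ht]
          congr 2
          ring
        rw [lintegral_Ioi_ofReal_rpow (by linarith) ht, mul_assoc,
          ← ENNReal.ofReal_mul (by positivity), exponents, ENNReal.ofReal_mul (by positivity),
          mul_left_comm]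
    _ = _ := by
        rw [lintegral_const_mul' _ _ ENNReal.ofReal_ne_top, ← mul_assoc,
          ← ENNReal.ofReal_mul (by positivity), ← Real.rpow_neg_one, ← Real.rpow_add ha]
        ring_nf

theorem weighted_hardy_inequality_general {p b : ℝ} (hp : 1 < p) (hb : 0 < b)
    (f : ℝ → ℝ) (hf : Measurable f) :
    (∫⁻ x in Ioi (0 : ℝ),
        (∫⁻ t in Ioc (0 : ℝ) x, ENNReal.ofReal (f t)) ^ p * ENNReal.ofReal (x ^ (-b - 1)))
        ^ (1 / p) ≤
      ENNReal.ofReal (p / b) *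
        (∫⁻ t in Ioi (0 : ℝ),
          ENNReal.ofReal (f t) ^ p * ENNReal.ofReal (t ^ (p - b - 1))) ^ (1 / p) := by
  have hp0 : 0 < p := by linarith
  obtain ⟨a, ha, rfl⟩ : ∃ a, 0 < a ∧ b = a * p := ⟨b / p, by positivity, by field_simp⟩
  calc _ ≤ (ENNReal.ofReal (a ^ (-p)) *
        ∫⁻ t in Ioi 0, ENNReal.ofReal (f t) ^ p * ENNReal.ofReal (t ^ (p - a * p - 1))) ^ (1 / p) :=
        ENNReal.rpow_le_rpow (lintegral_hardy_rpow_le hp ha hf.ennreal_ofReal) (by positivity)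
    _ = _ := by
        rw [ENNReal.mul_rpow_of_nonneg _ _ (by positivity),
          ENNReal.ofReal_rpow_of_pos (by positivity), ← Real.rpow_mul ha.le,
          neg_mul, mul_one_div_cancel hp0.ne', Real.rpow_neg_one, div_mul_cancel_right₀ hp0.ne']

/-- The weighted Hardy integral inequality: for `1 < p < ∞`, `0 < b < p`, and any
nonnegative measurable `f` on `(0,∞)`,
`(∫₀^∞ (∫₀ˣ f)^p x^{-b-1} dx)^{1/p} ≤ (p/b) (∫₀^∞ f(t)^p t^{p-b-1} dt)^{1/p}`. -/
theorem weighted_hardy_inequality {p b : ℝ} (hp : 1 < p) (hb : 0 < b) (hbp : b < p)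
    (f : ℝ → ℝ) (hf : Measurable f) (hf0 : ∀ t ∈ Ioi (0 : ℝ), 0 ≤ f t) :
    (∫⁻ x in Ioi (0 : ℝ),
        (∫⁻ t in Ioc (0 : ℝ) x, ENNReal.ofReal (f t)) ^ p * ENNReal.ofReal (x ^ (-b - 1)))
        ^ (1 / p) ≤
      ENNReal.ofReal (p / b) *
        (∫⁻ t in Ioi (0 : ℝ),
          ENNReal.ofReal (f t) ^ p * ENNReal.ofReal (t ^ (p - b - 1))) ^ (1 / p) :=
  weighted_hardy_inequality_general hp hb f hf
end
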